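/- Let $(L,\leq,0,1)$ be a bounded lattice, $e\in L\setminus\{0,1\}$, $I_e=\{x: x\parallel e\}$, and let $T_e$ be a t-norm on $[0,e]$. Define $U_T(x,y)=T_e(x,y)$ on $[0,e]^2$; $1$ on $(e,1]^2$; $y$ on $[0,e]\times I_e$; $x$ on $I_e\times[0,e]$; $x\vee y$ otherwise. Then $U_T$ is a uninorm on $L$ with neutral element $e$ if and only if $\{y\vee z: y,z\in I_e\}\subseteq I_e\cup\{1\}$. -/

import Mathlib

/-!
Write `A = [0, e]`. Outside `A²` the operation does not involve `T` at all: elements of `A` act as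
the identity on `L \ A`, and on `L \ A` it is the join, except that two elements above `e`
multiply to `⊤`. An operation that is associative on each of two complementary pieces, preserves
both, and on which one piece acts as the identity on the other, is associative. On `L \ A`, the
product of three elements is `⊤` if two of them lie above `e` and their join otherwise, provided the
join of two elements of `I_e` stays in `I_e ∪ {⊤}`; this symmetric formula gives associativity.
Conversely, for `y, z ∈ I_e` with `e < y ⊔ z`, associativity applied to `y, z, y ⊔ z` forces
`y ⊔ z = ⊤`.
-/

theorem assoc_of_assoc_of_absorbs {α : Type*} (s : Set α) (f : α → α → α)
    (hs : ∀ x ∈ s, ∀ y ∈ s, f x y ∈ s) (hsc : ∀ x ∉ s, ∀ y ∉ s, f x y ∉ s)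
    (hl : ∀ x ∈ s, ∀ y ∉ s, f x y = y) (hr : ∀ x ∉ s, ∀ y ∈ s, f x y = x)
    (has : ∀ x ∈ s, ∀ y ∈ s, ∀ z ∈ s, f (f x y) z = f x (f y z))
    (hasc : ∀ x ∉ s, ∀ y ∉ s, ∀ z ∉ s, f (f x y) z = f x (f y z)) (x y z : α) :
    f (f x y) z = f x (f y z) := by
  by_cases hx : x ∈ s <;> by_cases hy : y ∈ s <;> by_cases hz : z ∈ s
  · exact has x hx y hy z hz
  · rw [hl _ (hs x hx y hy) z hz, hl y hy z hz, hl x hx z hz]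
  · rw [hl x hx y hy, hr y hy z hz, hl x hx y hy]
  · rw [hl x hx y hy, hl x hx _ (hsc y hy z hz)]
  · rw [hr x hx y hy, hr x hx z hz, hr x hx _ (hs y hy z hz)]
  · rw [hr x hx y hy, hl y hy z hz]
  · rw [hr _ (hsc x hx y hy) z hz, hr y hy z hz]
  · exact hasc x hx y hy z hz

theorem incompRel_of_not_le_of_not_lt {α : Type*} [PartialOrder α] {a b : α} (h : ¬a ≤ b)
    (h' : ¬b < a) : IncompRel (· ≤ ·) a b :=
  ⟨h, fun hba ↦ h' (hba.lt_of_ne fun hab ↦ h hab.ge)⟩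

section

variable {L : Type*} [Lattice L] [BoundedOrder L]

def SupClosedIncomp (e : L) : Prop :=
  ∀ y z, IncompRel (· ≤ ·) y e → IncompRel (· ≤ ·) z e →
    IncompRel (· ≤ ·) (y ⊔ z) e ∨ y ⊔ z = ⊤

open Classical in
noncomputable def supOrTop (e x y : L) : L :=
  if e < x ∧ e < y then ⊤ else x ⊔ y

open Classical in
noncomputable def uninormOfTNorm (e : L) (T : L → L → L) (x y : L) : L :=
  if x ≤ e ∧ y ≤ e then T x y
  else if e < x ∧ e < y then (⊤ : L)
  else if x ≤ e ∧ (¬ y ≤ e ∧ ¬ e ≤ y) then y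
  else if (¬ x ≤ e ∧ ¬ e ≤ x) ∧ y ≤ e then x
  else x ⊔ y

section supOrTop

variable {e x y z : L}

theorem supOrTop_of_lt (h : e < x ∧ e < y) : supOrTop e x y = ⊤ := if_pos h

theorem supOrTop_of_not_lt (h : ¬(e < x ∧ e < y)) : supOrTop e x y = x ⊔ y := if_neg h

theorem le_supOrTop : x ⊔ y ≤ supOrTop e x y := by
  by_cases h : e < x ∧ e < y
  · simp [supOrTop_of_lt h]
  · rw [supOrTop_of_not_lt h]

theorem supOrTop_comm : supOrTop e x y = supOrTop e y x := by
  by_cases h : e < x ∧ e < y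
  · rw [supOrTop_of_lt h, supOrTop_of_lt h.symm]
  · rw [supOrTop_of_not_lt h, supOrTop_of_not_lt (mt And.symm h), sup_comm]

theorem supOrTop_top_left : supOrTop e ⊤ z = ⊤ :=
  top_le_iff.1 ((le_sup_left : ⊤ ≤ ⊤ ⊔ z).trans le_supOrTop)

theorem supOrTop_le_supOrTop_left (h : x ≤ y) : supOrTop e x z ≤ supOrTop e y z := by
  by_cases hxz : e < x ∧ e < z
  · rw [supOrTop_of_lt hxz, supOrTop_of_lt ⟨hxz.1.trans_le h, hxz.2⟩]
  · rw [supOrTop_of_not_lt hxz]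
    exact (sup_le_sup_right h z).trans le_supOrTop

theorem not_le_supOrTop (hx : ¬x ≤ e) : ¬supOrTop e x y ≤ e :=
  fun h ↦ hx (le_sup_left.trans (le_supOrTop.trans h))

open Classical in
theorem supOrTop_supOrTop (H : SupClosedIncomp e) (hx : ¬x ≤ e) (hy : ¬y ≤ e) :
    supOrTop e (supOrTop e x y) z =
      if (e < x ∧ e < y) ∨ (e < y ∧ e < z) ∨ (e < x ∧ e < z) then ⊤ else x ⊔ y ⊔ z := by
  by_cases hxy : e < x ∧ e < y
  · rw [supOrTop_of_lt hxy, supOrTop_top_left, if_pos (Or.inl hxy)]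
  rw [supOrTop_of_not_lt hxy]
  by_cases hz : e < x ⊔ y ∧ e < z
  · rw [supOrTop_of_lt hz]
    by_cases hc : (e < x ∧ e < y) ∨ (e < y ∧ e < z) ∨ (e < x ∧ e < z)
    · rw [if_pos hc]
    · rw [if_neg hc]
      simp only [hz.2, and_true, not_or] at hc
      rcases H x y (incompRel_of_not_le_of_not_lt hx hc.2.2)
        (incompRel_of_not_le_of_not_lt hy hc.2.1) with h | h
      · exact absurd hz.1.le h.2
      · rw [h, top_sup_eq]
  · rw [supOrTop_of_not_lt hz, if_neg]
    rintro (h | h | h)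
    · exact hxy h
    · exact hz ⟨h.1.trans_le le_sup_right, h.2⟩
    · exact hz ⟨h.1.trans_le le_sup_left, h.2⟩

theorem supOrTop_assoc (H : SupClosedIncomp e) (hx : ¬x ≤ e) (hy : ¬y ≤ e) (hz : ¬z ≤ e) :
    supOrTop e (supOrTop e x y) z = supOrTop e x (supOrTop e y z) := by
  classical
  rw [supOrTop_comm (x := x) (y := supOrTop e y z), supOrTop_supOrTop H hx hy,
    supOrTop_supOrTop H hy hz]
  exact if_congr (by tauto) rfl (by ac_rfl)

end supOrTop

section uninormOfTNorm

variable {e x y z : L} {T : L → L → L}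

theorem uninormOfTNorm_of_le_of_le (hx : x ≤ e) (hy : y ≤ e) : uninormOfTNorm e T x y = T x y :=
  if_pos ⟨hx, hy⟩

theorem uninormOfTNorm_of_le_of_not_le (hx : x ≤ e) (hy : ¬y ≤ e) :
    uninormOfTNorm e T x y = y := by
  by_cases hey : e ≤ y
  · simp [uninormOfTNorm, hx, hy, not_lt_of_ge hx, hx.trans hey]
  · simp [uninormOfTNorm, hx, hy, not_lt_of_ge hx, hey]

theorem uninormOfTNorm_of_not_le_of_le (hx : ¬x ≤ e) (hy : y ≤ e) :
    uninormOfTNorm e T x y = x := by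
  by_cases hex : e ≤ x
  · simp [uninormOfTNorm, hx, hy, not_lt_of_ge hy, hy.trans hex]
  · simp [uninormOfTNorm, hx, hy, not_lt_of_ge hy, hex]

theorem uninormOfTNorm_of_not_le_of_not_le (hx : ¬x ≤ e) (hy : ¬y ≤ e) :
    uninormOfTNorm e T x y = supOrTop e x y := by
  simp [uninormOfTNorm, supOrTop, hx, hy]

theorem uninormOfTNorm_comm (hTcomm : ∀ x y, x ≤ e → y ≤ e → T x y = T y x) :
    uninormOfTNorm e T x y = uninormOfTNorm e T y x := by
  by_cases hx : x ≤ e <;> by_cases hy : y ≤ e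
  · rw [uninormOfTNorm_of_le_of_le hx hy, uninormOfTNorm_of_le_of_le hy hx, hTcomm x y hx hy]
  · rw [uninormOfTNorm_of_le_of_not_le hx hy, uninormOfTNorm_of_not_le_of_le hy hx]
  · rw [uninormOfTNorm_of_not_le_of_le hx hy, uninormOfTNorm_of_le_of_not_le hy hx]
  · rw [uninormOfTNorm_of_not_le_of_not_le hx hy, uninormOfTNorm_of_not_le_of_not_le hy hx,
      supOrTop_comm]

theorem uninormOfTNorm_neutral (hTe : ∀ x, x ≤ e → T e x = x ∧ T x e = x) :
    uninormOfTNorm e T e x = x ∧ uninormOfTNorm e T x e = x := by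
  by_cases hx : x ≤ e
  · rw [uninormOfTNorm_of_le_of_le le_rfl hx, uninormOfTNorm_of_le_of_le hx le_rfl]
    exact hTe x hx
  · exact ⟨uninormOfTNorm_of_le_of_not_le le_rfl hx, uninormOfTNorm_of_not_le_of_le hx le_rfl⟩

theorem uninormOfTNorm_mono_left (hTcomm : ∀ x y, x ≤ e → y ≤ e → T x y = T y x)
    (hTmono : ∀ x y z, x ≤ e → y ≤ e → z ≤ e → x ≤ y → T x z ≤ T y z)
    (hTe : ∀ x, x ≤ e → T e x = x ∧ T x e = x) (hxy : x ≤ y) :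
    uninormOfTNorm e T x z ≤ uninormOfTNorm e T y z := by
  by_cases hz : z ≤ e
  · by_cases hy : y ≤ e
    · have hx := hxy.trans hy
      rw [uninormOfTNorm_of_le_of_le hx hz, uninormOfTNorm_of_le_of_le hy hz]
      exact hTmono x y z hx hy hz hxy
    rw [uninormOfTNorm_of_not_le_of_le hy hz]
    by_cases hx : x ≤ e
    · rw [uninormOfTNorm_of_le_of_le hx hz]
      calc T x z = T z x := hTcomm x z hx hz
        _ ≤ T e x := hTmono z e x hz le_rfl hx hz
        _ = x := (hTe x hx).1
        _ ≤ y := hxy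
    · rwa [uninormOfTNorm_of_not_le_of_le hx hz]
  · by_cases hy : y ≤ e
    · have hx := hxy.trans hy
      rw [uninormOfTNorm_of_le_of_not_le hx hz, uninormOfTNorm_of_le_of_not_le hy hz]
    rw [uninormOfTNorm_of_not_le_of_not_le hy hz]
    by_cases hx : x ≤ e
    · rw [uninormOfTNorm_of_le_of_not_le hx hz]
      exact le_sup_right.trans le_supOrTop
    · rw [uninormOfTNorm_of_not_le_of_not_le hx hz]
      exact supOrTop_le_supOrTop_left hxy

theorem uninormOfTNorm_mono_right (hTcomm : ∀ x y, x ≤ e → y ≤ e → T x y = T y x)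
    (hTmono : ∀ x y z, x ≤ e → y ≤ e → z ≤ e → x ≤ y → T x z ≤ T y z)
    (hTe : ∀ x, x ≤ e → T e x = x ∧ T x e = x) (hxy : x ≤ y) :
    uninormOfTNorm e T z x ≤ uninormOfTNorm e T z y := by
  rw [uninormOfTNorm_comm hTcomm (x := z), uninormOfTNorm_comm hTcomm (x := z)]
  exact uninormOfTNorm_mono_left hTcomm hTmono hTe hxy

theorem uninormOfTNorm_assoc (hTcl : ∀ x y, x ≤ e → y ≤ e → T x y ≤ e)
    (hTassoc : ∀ x y z, x ≤ e → y ≤ e → z ≤ e → T (T x y) z = T x (T y z))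
    (H : SupClosedIncomp e) (x y z : L) :
    uninormOfTNorm e T (uninormOfTNorm e T x y) z =
      uninormOfTNorm e T x (uninormOfTNorm e T y z) := by
  refine assoc_of_assoc_of_absorbs (Set.Iic e) _ (fun x hx y hy ↦ ?_) (fun x hx y hy ↦ ?_)
    (fun x hx y hy ↦ uninormOfTNorm_of_le_of_not_le hx hy)
    (fun x hx y hy ↦ uninormOfTNorm_of_not_le_of_le hx hy)
    (fun x hx y hy z hz ↦ ?_) (fun x hx y hy z hz ↦ ?_) x y z
  · rw [Set.mem_Iic, uninormOfTNorm_of_le_of_le hx hy]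
    exact hTcl x y hx hy
  · rw [Set.mem_Iic, uninormOfTNorm_of_not_le_of_not_le hx hy]
    exact not_le_supOrTop hx
  · rw [uninormOfTNorm_of_le_of_le hx hy, uninormOfTNorm_of_le_of_le (hTcl x y hx hy) hz,
      uninormOfTNorm_of_le_of_le hy hz, uninormOfTNorm_of_le_of_le hx (hTcl y z hy hz)]
    exact hTassoc x y z hx hy hz
  · rw [uninormOfTNorm_of_not_le_of_not_le hx hy,
      uninormOfTNorm_of_not_le_of_not_le (not_le_supOrTop hx) hz,
      uninormOfTNorm_of_not_le_of_not_le hy hz,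
      uninormOfTNorm_of_not_le_of_not_le hx (not_le_supOrTop hy)]
    exact supOrTop_assoc H hx hy hz

theorem supClosedIncomp_of_assoc
    (h : ∀ x y z, uninormOfTNorm e T (uninormOfTNorm e T x y) z =
      uninormOfTNorm e T x (uninormOfTNorm e T y z)) :
    SupClosedIncomp e := by
  intro y z hy hz
  by_contra! hc
  have hyz : ¬y ⊔ z ≤ e := fun h ↦ hy.1 (le_sup_left.trans h)
  have hlt : e < y ⊔ z := by
    refine lt_of_le_of_ne ?_ fun h ↦ hyz h.ge
    by_contra h'
    exact hc.1 ⟨hyz, h'⟩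
  have hsup {a : L} (ha : IncompRel (· ≤ ·) a e) (b : L) : supOrTop e a b = a ⊔ b :=
    supOrTop_of_not_lt fun h ↦ ha.2 h.1.le
  have key := h y z (y ⊔ z)
  rw [uninormOfTNorm_of_not_le_of_not_le hy.1 hz.1, hsup hy,
    uninormOfTNorm_of_not_le_of_not_le hyz hyz, supOrTop_of_lt ⟨hlt, hlt⟩,
    uninormOfTNorm_of_not_le_of_not_le hz.1 hyz, hsup hz, sup_of_le_right le_sup_right,
    uninormOfTNorm_of_not_le_of_not_le hy.1 hyz, hsup hy, sup_of_le_right le_sup_left] at key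
  exact hc.2 key.symm

end uninormOfTNorm

end

open Classical in
theorem stmt11_general {L : Type*} [Lattice L] [BoundedOrder L] (e : L)
    (T : L → L → L)
    (hTcl : ∀ x y, x ≤ e → y ≤ e → T x y ≤ e)
    (hTcomm : ∀ x y, x ≤ e → y ≤ e → T x y = T y x)
    (hTassoc : ∀ x y z, x ≤ e → y ≤ e → z ≤ e → T (T x y) z = T x (T y z))
    (hTmono : ∀ x y z, x ≤ e → y ≤ e → z ≤ e → x ≤ y → T x z ≤ T y z)
    (hTe : ∀ x, x ≤ e → T e x = x ∧ T x e = x)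
    (U : L → L → L)
    (hU : ∀ x y, U x y =
      if x ≤ e ∧ y ≤ e then T x y
      else if e < x ∧ e < y then (⊤ : L)
      else if x ≤ e ∧ (¬ y ≤ e ∧ ¬ e ≤ y) then y
      else if (¬ x ≤ e ∧ ¬ e ≤ x) ∧ y ≤ e then x
      else x ⊔ y) :
    ((∀ x y, U x y = U y x) ∧
      (∀ x y z, U (U x y) z = U x (U y z)) ∧
      (∀ x y z, x ≤ y → U x z ≤ U y z ∧ U z x ≤ U z y) ∧
      (∀ x, U e x = x ∧ U x e = x)) ↔
    (∀ y z, (¬ y ≤ e ∧ ¬ e ≤ y) → (¬ z ≤ e ∧ ¬ e ≤ z) →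
      (¬ y ⊔ z ≤ e ∧ ¬ e ≤ y ⊔ z) ∨ y ⊔ z = ⊤) := by
  obtain rfl : U = uninormOfTNorm e T := funext₂ hU
  refine ⟨fun ⟨_, hassoc, _, _⟩ ↦ supClosedIncomp_of_assoc hassoc, fun H ↦ ⟨?_, ?_, ?_, ?_⟩⟩
  · exact fun x y ↦ uninormOfTNorm_comm hTcomm
  · exact uninormOfTNorm_assoc hTcl hTassoc H
  · exact fun x y z hxy ↦ ⟨uninormOfTNorm_mono_left hTcomm hTmono hTe hxy,
      uninormOfTNorm_mono_right hTcomm hTmono hTe hxy⟩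
  · exact fun x ↦ uninormOfTNorm_neutral hTe

open Classical in
theorem stmt11 {L : Type*} [Lattice L] [BoundedOrder L] (e : L)
    (he0 : e ≠ ⊥) (he1 : e ≠ ⊤)
    (T : L → L → L)
    (hTcl : ∀ x y, x ≤ e → y ≤ e → T x y ≤ e)
    (hTcomm : ∀ x y, x ≤ e → y ≤ e → T x y = T y x)
    (hTassoc : ∀ x y z, x ≤ e → y ≤ e → z ≤ e → T (T x y) z = T x (T y z))
    (hTmono : ∀ x y z, x ≤ e → y ≤ e → z ≤ e → x ≤ y → T x z ≤ T y z)
    (hTe : ∀ x, x ≤ e → T e x = x ∧ T x e = x)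
    (U : L → L → L)
    (hU : ∀ x y, U x y =
      if x ≤ e ∧ y ≤ e then T x y
      else if e < x ∧ e < y then (⊤ : L)
      else if x ≤ e ∧ (¬ y ≤ e ∧ ¬ e ≤ y) then y
      else if (¬ x ≤ e ∧ ¬ e ≤ x) ∧ y ≤ e then x
      else x ⊔ y) :
    ((∀ x y, U x y = U y x) ∧
      (∀ x y z, U (U x y) z = U x (U y z)) ∧
      (∀ x y z, x ≤ y → U x z ≤ U y z ∧ U z x ≤ U z y) ∧
      (∀ x, U e x = x ∧ U x e = x)) ↔
    (∀ y z, (¬ y ≤ e ∧ ¬ e ≤ y) → (¬ z ≤ e ∧ ¬ e ≤ z) →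
      (¬ y ⊔ z ≤ e ∧ ¬ e ≤ y ⊔ z) ∨ y ⊔ z = ⊤) :=
  stmt11_general e T hTcl hTcomm hTassoc hTmono hTe U hU
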